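/- arXiv:0909.0774 — 6 statements merged into one kernel-verified Lean document; each statement's English description precedes it below -/
import Mathlib

section
/- In a free group, commutation is transitive through nontrivial elements: if x, y, z are elements of a free group with y ≠ 1, x commutes with y, and y commutes with z, then x commutes with z. -/
/-!
The centralizer `C` of `y` is free by Nielsen–Schreier, and `y` is a nontrivial central element
of it. In a free group, the abelian subgroup generated by a central `w` and a basis element `a`
is free and abelian, hence cyclic, say generated by `c`; counting exponents of `a` shows that `c`
is `a^{±1}`, so `w` is a power of `a`. A nontrivial `w` cannot be a power of two different
basis elements, so `C` has rank at most one and is abelian.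
-/
namespace IsFreeGroup

variable {G : Type*} [Group G] [IsFreeGroup G]

theorem subsingleton_generators_of_isMulCommutative [IsMulCommutative G] :
    Subsingleton (Generators G) := by
  classical
  refine ⟨fun a b => by_contra fun hab => ?_⟩
  let f : G →* Equiv.Perm (Fin 3) :=
    lift fun c => if c = a then Equiv.swap 0 1 else Equiv.swap 1 2
  have hcomm := congrArg f (mul_comm' (of a) (of b))
  simp only [f, map_mul, lift_of, if_pos, if_neg (Ne.symm hab)] at hcomm
  exact absurd hcomm (by decide)

theorem isCyclic_of_subsingleton_generators [Subsingleton (Generators G)] : IsCyclic G := by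
  have : IsCyclic (FreeGroup (Generators G)) := by
    rcases isEmpty_or_nonempty (Generators G) with _ | ⟨⟨a⟩⟩
    · exact isCyclic_of_subsingleton
    · have := uniqueOfSubsingleton a
      infer_instance
  exact isCyclic_of_surjective (toFreeGroup G).symm (toFreeGroup G).symm.surjective

theorem isCyclic_of_isMulCommutative [IsMulCommutative G] : IsCyclic G :=
  have := subsingleton_generators_of_isMulCommutative (G := G)
  isCyclic_of_subsingleton_generators

theorem exists_mem_zpowers_of_commute {g h : G} (hgh : Commute g h) :
    ∃ c : G, g ∈ Subgroup.zpowers c ∧ h ∈ Subgroup.zpowers c := by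
  let H := Subgroup.closure ({g, h} : Set G)
  have : IsMulCommutative H := Subgroup.isMulCommutative_closure <| by
    rintro _ (rfl | rfl) _ (rfl | rfl) <;> first | rfl | exact hgh | exact hgh.symm
  -- `H` is free by Nielsen–Schreier (`subgroupIsFreeOfIsFree`).
  have : IsCyclic H := isCyclic_of_isMulCommutative
  obtain ⟨c, hc⟩ := IsCyclic.exists_generator (α := H)
  have mem_zpowers (k : H) : (k : G) ∈ Subgroup.zpowers (c : G) := by
    obtain ⟨n, hn⟩ := Subgroup.mem_zpowers_iff.mp (hc k)
    exact Subgroup.mem_zpowers_iff.mpr ⟨n, by rw [← hn, Subgroup.coe_zpow]⟩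
  exact ⟨c, mem_zpowers ⟨g, Subgroup.subset_closure (by simp)⟩,
    mem_zpowers ⟨h, Subgroup.subset_closure (by simp)⟩⟩

open scoped Classical in
noncomputable def exponentSum (a : Generators G) : G →* Multiplicative ℤ :=
  lift (Pi.mulSingle a (Multiplicative.ofAdd 1))

@[simp]
theorem exponentSum_of_self (a : Generators G) :
    exponentSum a (of a) = Multiplicative.ofAdd 1 := by
  simp [exponentSum]

@[simp]
theorem exponentSum_of_of_ne {a b : Generators G} (h : b ≠ a) : exponentSum a (of b) = 1 := by
  simp [exponentSum, h]

theorem mem_zpowers_of_commute_of {w : G} {a : Generators G} (h : Commute w (of a)) :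
    w ∈ Subgroup.zpowers (of a) := by
  obtain ⟨c, hw, ⟨n, hn⟩⟩ := exists_mem_zpowers_of_commute h
  have hn_unit : n * Multiplicative.toAdd (exponentSum a c) = 1 := by
    simpa using congrArg (Multiplicative.toAdd ∘ exponentSum a) hn
  have hn_sq : n * n = 1 := by
    rcases Int.eq_one_or_neg_one_of_mul_eq_one hn_unit with rfl | rfl <;> rfl
  have hc : c = of a ^ n := by rw [← hn, ← zpow_mul, hn_sq, zpow_one]
  exact Subgroup.zpowers_le.mpr (hc ▸ Subgroup.zpow_mem_zpowers _ _) hw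

theorem subsingleton_generators_of_mem_center {w : G} (hw : w ∈ Subgroup.center G)
    (hw1 : w ≠ 1) :
    Subsingleton (Generators G) := by
  refine ⟨fun a b => by_contra fun hab => hw1 ?_⟩
  have commute_of (c : Generators G) : Commute w (of c) := (Subgroup.mem_center_iff.mp hw _).symm
  obtain ⟨m, rfl⟩ := Subgroup.mem_zpowers_iff.mp (mem_zpowers_of_commute_of (commute_of a))
  obtain ⟨k, hk⟩ := Subgroup.mem_zpowers_iff.mp (mem_zpowers_of_commute_of (commute_of b))
  have hm : 0 = m := by
    simpa [Ne.symm hab] using congrArg (Multiplicative.toAdd ∘ exponentSum a) hk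
  rw [← hm, zpow_zero]

theorem isMulCommutative_of_mem_center {w : G} (hw : w ∈ Subgroup.center G) (hw1 : w ≠ 1) :
    IsMulCommutative G :=
  have := subsingleton_generators_of_mem_center hw hw1
  have := isCyclic_of_subsingleton_generators (G := G)
  inferInstance

end IsFreeGroup

theorem freeGroup_commute_trans {α : Type*} (x y z : FreeGroup α)
    (hy : y ≠ 1) (hxy : x * y = y * x) (hyz : y * z = z * y) :
    x * z = z * x := by
  let C := Subgroup.centralizer ({y} : Set (FreeGroup α))
  have hyC : (⟨y, Subgroup.mem_centralizer_singleton_iff.mpr rfl⟩ : C) ∈ Subgroup.center C :=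
    Subgroup.mem_center_iff.mpr fun g =>
      Subtype.ext (Subgroup.mem_centralizer_singleton_iff.mp g.2)
  have := IsFreeGroup.isMulCommutative_of_mem_center hyC (by simpa [Subtype.ext_iff] using hy)
  exact congrArg Subtype.val <| mul_comm'
    (⟨x, Subgroup.mem_centralizer_singleton_iff.mpr hxy⟩ : C)
    ⟨z, Subgroup.mem_centralizer_singleton_iff.mpr hyz.symm⟩
end

section
/- The centralizer of a nontrivial element of a free group is infinite cyclic: for every s ≠ 1 in a free group F, there exists z ∈ F such that the centralizer of s in F equals the cyclic subgroup generated by z. -/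
/-!
By Nielsen–Schreier the centralizer `H` of `s` is a free group, and `s` is a nontrivial element
of the centre of `H`. A nontrivial reduced word `w` commutes with no generator `d` other than
the first letter of `w`, since then `d w` is reduced while `w d` is at most as long and starts
differently. So a free group with nontrivial centre has at most one generator, hence is cyclic.
-/

namespace FreeGroup

section DecidableEq

variable {ι : Type*} [DecidableEq ι]

theorem toWord_of_mul_of_ne_head {z : FreeGroup ι} {p : ι × Bool} {t : List (ι × Bool)}
    (hz : z.toWord = p :: t) {d : ι} (hd : d ≠ p.1) :
    (of d * z).toWord = (d, true) :: z.toWord := by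
  rw [toWord_mul, toWord_of, List.singleton_append, reduce.cons, reduce_toWord, hz]
  simp [hd]

theorem not_commute_of_of_ne_head {z : FreeGroup ι} {p : ι × Bool} {t : List (ι × Bool)}
    (hz : z.toWord = p :: t) {d : ι} (hd : d ≠ p.1) : ¬Commute (of d) z := by
  intro hcomm
  have hword : (z * of d).toWord = (d, true) :: z.toWord := by
    rw [← hcomm.eq, toWord_of_mul_of_ne_head hz hd]
  have hsub : ((d, true) :: z.toWord).Sublist (z.toWord ++ [(d, true)]) := by
    simpa [hword, toWord_of] using toWord_mul_sublist z (of d)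
  have heq : (d, true) :: p :: t = p :: t ++ [(d, true)] := by
    rw [← hz]
    exact hsub.eq_of_length (by simp)
  exact hd (congrArg Prod.fst (List.cons.inj heq).1)

end DecidableEq

theorem subsingleton_of_mem_center {ι : Type*} {z : FreeGroup ι} (hz : z ∈ Subgroup.center _)
    (hz1 : z ≠ 1) : Subsingleton ι := by
  classical
  obtain ⟨p, t, hpt⟩ := List.exists_cons_of_ne_nil (mt toWord_eq_nil_iff.mp hz1)
  have head : ∀ d : ι, d = p.1 := fun d ↦ by_contra fun hd ↦
    not_commute_of_of_ne_head hpt hd (Subgroup.mem_center_iff.mp hz (of d))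
  exact ⟨fun a b ↦ (head a).trans (head b).symm⟩

theorem isCyclic_of_subsingleton {ι : Type*} [Subsingleton ι] : IsCyclic (FreeGroup ι) := by
  cases isEmpty_or_nonempty ι
  · infer_instance
  · obtain ⟨i⟩ := ‹Nonempty ι›
    have : Unique ι := uniqueOfSubsingleton i
    infer_instance

end FreeGroup

theorem IsFreeGroup.isCyclic_of_mem_center {G : Type*} [Group G] [IsFreeGroup G] {z : G}
    (hz : z ∈ Subgroup.center G) (hz1 : z ≠ 1) : IsCyclic G := by
  let e := IsFreeGroup.toFreeGroup G
  have he : e z ∈ Subgroup.center _ := Subgroup.mem_center_iff.mpr fun g ↦ by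
    simpa using congrArg e (Subgroup.mem_center_iff.mp hz (e.symm g))
  have := FreeGroup.subsingleton_of_mem_center he (by simpa using hz1)
  exact e.isCyclic.mpr FreeGroup.isCyclic_of_subsingleton

theorem Subgroup.mk_mem_center_centralizer_singleton {G : Type*} [Group G] (s : G) :
    (⟨s, mem_centralizer_singleton_iff.mpr rfl⟩ : centralizer {s}) ∈ center (centralizer {s}) :=
  mem_center_iff.mpr fun g ↦ Subtype.ext (mem_centralizer_singleton_iff.mp g.2)

theorem freeGroup_centralizer_cyclic {α : Type*} (s : FreeGroup α) (hs : s ≠ 1) :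
    ∃ z : FreeGroup α, Subgroup.centralizer {s} = Subgroup.zpowers z := by
  have : IsCyclic (Subgroup.centralizer {s}) :=
    IsFreeGroup.isCyclic_of_mem_center (Subgroup.mk_mem_center_centralizer_singleton s)
      (fun h ↦ hs (congrArg Subtype.val h))
  obtain ⟨z, hz⟩ := (Subgroup.centralizer {s}).isCyclic_iff_exists_zpowers_eq_top.mp this
  exact ⟨z, hz.symm⟩
end

section
/- Fix an integer m ≥ 1 and a free group F. Define a relation on the set of pairs {(x, y) ∈ F × F : y ≠ 1} by: (x₁, y₁) ∼ (x₂, y₂) if and only if y₁*y₂ = y₂*y₁ and there exists y ∈ F with y*y₁ = y₁*y and x₁⁻¹*x₂ = y^m. Then ∼ is an equivalence relation. -/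
/-!
Free groups are commutative-transitive: the centralizer of `b ≠ 1` is free by Nielsen–Schreier
and contains `b` in its center, while a free group of rank at least two has trivial center; so
the centralizer has rank one and is abelian. Pivoting on the nontrivial second coordinates, all
elements occurring in the relation then commute, and transitivity is witnessed by `y * y'`, since
`(y * y') ^ m = y ^ m * y' ^ m`.
-/

theorem List.forall_mem_eq_of_cons_eq_append_singleton {β : Type*} {a : β} {l : List β}
    (h : a :: l = l ++ [a]) : ∀ b ∈ l, b = a := by
  induction l with
  | nil => simp
  | cons y t ih =>
    obtain ⟨rfl, h⟩ := List.cons.inj h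
    simpa using ih h

namespace FreeGroup

variable {β : Type*}

theorem forall_mem_toWord_eq_of_commute [DecidableEq β] {z : FreeGroup β} {p : β × Bool}
    (hright : IsReduced (z.toWord ++ [p])) (hleft : IsReduced (p :: z.toWord))
    (hz : Commute z (mk [p])) : ∀ q ∈ z.toWord, q = p := by
  have hp : (mk [p]).toWord = [p] := by rw [toWord_mk, IsReduced.singleton.reduce_eq]
  apply List.forall_mem_eq_of_cons_eq_append_singleton
  calc p :: z.toWord = (mk [p] * z).toWord := by rw [toWord_mul, hp, ← hleft.reduce_eq]; rfl
    _ = (z * mk [p]).toWord := by rw [hz.eq]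
    _ = z.toWord ++ [p] := by rw [toWord_mul, hp, hright.reduce_eq]

theorem center_eq_bot [Nontrivial β] : Subgroup.center (FreeGroup β) = ⊥ := by
  classical
  refine (Subgroup.eq_bot_iff_forall _).mpr fun z hz => ?_
  by_contra hz1
  have hw : z.toWord ≠ [] := by simpa using hz1
  set f := z.toWord.head hw
  set l := z.toWord.getLast hw
  have all_eq (p : β × Bool) (hl : l.1 = p.1 → l.2 = p.2) (hf : p.1 = f.1 → p.2 = f.2) :
      ∀ q ∈ z.toWord, q = p := by
    refine forall_mem_toWord_eq_of_commute ?_ ?_ (Subgroup.mem_center_iff.mp hz _).symm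
    · refine List.isChain_append.mpr ⟨isReduced_toWord, IsReduced.singleton, ?_⟩
      rintro q hq _ ⟨⟩
      obtain rfl := Option.some.inj ((List.getLast?_eq_some_getLast hw).symm.trans hq)
      exact hl
    · rw [← List.cons_head_tail hw]
      exact isReduced_cons_cons.mpr ⟨hf, by rw [List.cons_head_tail hw]; exact isReduced_toWord⟩
  -- The first letter is admissible unless both ends share a generator, and then `(x, true)` is
  -- admissible for every other generator `x`.
  have hfl : f.1 = l.1 := by
    by_contra hne
    exact hne (congrArg Prod.fst (all_eq f (fun h => absurd h.symm hne) (fun _ => rfl) l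
      (List.getLast_mem hw))).symm
  obtain ⟨x, hx⟩ := exists_ne f.1
  exact hx (congrArg Prod.fst (all_eq (x, true) (fun h => absurd (hfl.trans h).symm hx)
    (fun h => absurd h hx) f (List.head_mem hw))).symm

theorem commute_of_mem_center {z : FreeGroup β} (hz : z ∈ Subgroup.center (FreeGroup β))
    (hz1 : z ≠ 1) (g h : FreeGroup β) : Commute g h := by
  have : Subsingleton β := not_nontrivial_iff_subsingleton.mp fun _ =>
    hz1 (by rwa [center_eq_bot, Subgroup.mem_bot] at hz)
  have : Nonempty β := by
    by_contra hβ
    have : IsEmpty β := not_nonempty_iff.mp hβ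
    exact hz1 (Subsingleton.elim z 1)
  have : Unique β := uniqueOfSubsingleton (Classical.arbitrary β)
  exact mul_comm' g h

end FreeGroup

theorem IsFreeGroup.commute_of_mem_center {G : Type*} [Group G] [IsFreeGroup G] {z : G}
    (hz : z ∈ Subgroup.center G) (hz1 : z ≠ 1) (g h : G) : Commute g h := by
  set e := IsFreeGroup.toFreeGroup G
  have hez : e z ∈ Subgroup.center _ := Subgroup.mem_center_iff.mpr fun u => by
    simpa using congrArg e (Subgroup.mem_center_iff.mp hz (e.symm u))
  simpa using (FreeGroup.commute_of_mem_center hez (by simpa using hz1) (e g) (e h)).map e.symm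

theorem IsFreeGroup.commute_of_commute {G : Type*} [Group G] [IsFreeGroup G] {b x y : G}
    (hb : b ≠ 1) (hx : Commute x b) (hy : Commute y b) : Commute x y := by
  let C := Subgroup.centralizer {b}
  have hmem {g : G} (hg : Commute g b) : g ∈ C := Subgroup.mem_centralizer_singleton_iff.mpr hg
  have hbC : ⟨b, hmem (Commute.refl b)⟩ ∈ Subgroup.center C :=
    Subgroup.mem_center_iff.mpr fun g => Subtype.ext (Subgroup.mem_centralizer_singleton_iff.mp g.2)
  exact congrArg Subtype.val
    (IsFreeGroup.commute_of_mem_center hbC (by simpa using hb) ⟨x, hmem hx⟩ ⟨y, hmem hy⟩)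

theorem freeGroup_left_coset_equivalence_general {α : Type*} (m : ℤ) :
    Equivalence (fun (p q : {p : FreeGroup α × FreeGroup α // p.2 ≠ 1}) =>
      p.1.2 * q.1.2 = q.1.2 * p.1.2 ∧
        ∃ y : FreeGroup α, y * p.1.2 = p.1.2 * y ∧ (p.1.1)⁻¹ * q.1.1 = y ^ m) := by
  refine ⟨fun p => ⟨rfl, 1, by simp, by simp⟩, ?_, ?_⟩
  · rintro ⟨⟨x₁, y₁⟩, h₁⟩ ⟨⟨x₂, y₂⟩, -⟩
      ⟨h₁₂ : Commute y₁ y₂, y, hy : Commute y y₁, hx : x₁⁻¹ * x₂ = y ^ m⟩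
    refine ⟨h₁₂.symm, y⁻¹, (IsFreeGroup.commute_of_commute h₁ hy h₁₂.symm).inv_left, ?_⟩
    rw [inv_zpow, ← hx, mul_inv_rev, inv_inv]
  · rintro ⟨⟨x₁, y₁⟩, h₁⟩ ⟨⟨x₂, y₂⟩, h₂⟩ ⟨⟨x₃, y₃⟩, -⟩
      ⟨h₁₂ : Commute y₁ y₂, y, hy : Commute y y₁, hx : x₁⁻¹ * x₂ = y ^ m⟩
      ⟨h₂₃ : Commute y₂ y₃, y', hy' : Commute y' y₂, hx' : x₂⁻¹ * x₃ = y' ^ m⟩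
    have h₁₃ : Commute y₁ y₃ := IsFreeGroup.commute_of_commute h₂ h₁₂ h₂₃.symm
    have hy'₁ : Commute y' y₁ := IsFreeGroup.commute_of_commute h₂ hy' h₁₂
    have hyy' : Commute y y' := IsFreeGroup.commute_of_commute h₁ hy hy'₁
    refine ⟨h₁₃, y * y', hy.mul_left hy'₁, ?_⟩
    calc x₁⁻¹ * x₃ = (x₁⁻¹ * x₂) * (x₂⁻¹ * x₃) := by group
      _ = (y * y') ^ m := by rw [hx, hx', hyy'.mul_zpow]

theorem freeGroup_left_coset_equivalence {α : Type*} (m : ℤ) (hm : 1 ≤ m) :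
    Equivalence (fun (p q : {p : FreeGroup α × FreeGroup α // p.2 ≠ 1}) =>
      p.1.2 * q.1.2 = q.1.2 * p.1.2 ∧
        ∃ y : FreeGroup α, y * p.1.2 = p.1.2 * y ∧ (p.1.1)⁻¹ * q.1.1 = y ^ m) :=
  freeGroup_left_coset_equivalence_general m
end

section
/- Fix integers m₁, m₂ ≥ 1 and a free group F. Define a relation on the set of triples {(y, x, z) ∈ F³ : y ≠ 1, z ≠ 1} by: (y₁, x₁, z₁) ∼ (y₂, x₂, z₂) if and only if y₁*y₂ = y₂*y₁, z₁*z₂ = z₂*z₁, and there exist y, z ∈ F with y*y₁ = y₁*y, z*z₁ = z₁*z, and y^{m₁} * x₁ * z^{m₂} = x₂. Then ∼ is an equivalence relation. -/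
/-!
Everything rests on commutative transitivity of free groups: if `a ≠ 1` commutes with `b` and
with `c`, then `b` and `c` commute. By Nielsen–Schreier the centralizer of `a` is free, and `a`
is a nontrivial central element of it. A nontrivial central element `w` of a free group forces a
single generator: for a generator `v` other than the first letter of `w`, the letter `ℓ` on `v`
with the exponent of the last letter of `w` cancels against neither end of the reduced word, so
`w ℓ = ℓ w` gives the reduced-word identity `w ++ [ℓ] = ℓ :: w`, whose heads disagree.
Hence the centralizer is cyclic, in particular abelian. With this, the witnesses `y` of
related triples all lie in the abelian centralizer of the nontrivial `y`-coordinates, so they can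
be inverted and multiplied, and likewise for `z`.
-/

namespace FreeGroup

variable {β : Type*}

theorem toWord_mul_of_isReduced [DecidableEq β] {x y : FreeGroup β}
    (h : IsReduced (x.toWord ++ y.toWord)) : (x * y).toWord = x.toWord ++ y.toWord := by
  rw [toWord_mul, h.reduce_eq]

theorem head?_toWord_eq_of_commute [DecidableEq β] {w : FreeGroup β} (hw : w ≠ 1)
    {ℓ : β × Bool} (hc : Commute w (mk [ℓ])) (hl : IsReduced (ℓ :: w.toWord))
    (hr : IsReduced (w.toWord ++ [ℓ])) : w.toWord.head? = some ℓ := by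
  have hmk : (mk [ℓ]).toWord = [ℓ] := by rw [toWord_mk, reduce_singleton]
  have hword : w.toWord ++ [ℓ] = ℓ :: w.toWord := by
    rw [← hmk, ← toWord_mul_of_isReduced (hmk ▸ hr), hc.eq,
      toWord_mul_of_isReduced (hmk ▸ hl), hmk]
    rfl
  have := congrArg List.head? hword
  rwa [List.head?_append_of_ne_nil _ (mt toWord_eq_nil_iff.mp hw)] at this

theorem subsingleton_of_ne_one_mem_center {w : FreeGroup β} (hw : w ≠ 1)
    (hc : w ∈ Subgroup.center (FreeGroup β)) : Subsingleton β := by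
  classical
  refine ⟨fun s t => by_contra fun hst => ?_⟩
  have hne : w.toWord ≠ [] := mt toWord_eq_nil_iff.mp hw
  obtain ⟨h, hh⟩ := Option.ne_none_iff_exists'.mp (mt List.head?_eq_none_iff.mp hne)
  obtain ⟨l, hl⟩ := Option.ne_none_iff_exists'.mp (mt List.getLast?_eq_none_iff.mp hne)
  obtain ⟨v, hv⟩ : ∃ v, v ≠ h.1 := by
    by_cases hs : s = h.1
    · exact ⟨t, fun ht => hst (hs.trans ht.symm)⟩
    · exact ⟨s, hs⟩
  have hcomm : Commute w (mk [(v, l.2)]) := (Subgroup.mem_center_iff.mp hc _).symm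
  have key := head?_toWord_eq_of_commute hw hcomm ?_ ?_
  · exact hv (congrArg Prod.fst (Option.some.inj (hh.symm.trans key))).symm
  · refine List.isChain_cons.mpr ⟨?_, isReduced_toWord⟩
    rw [hh]
    rintro _ ⟨⟩ hvh
    exact absurd hvh hv
  · refine List.isChain_append.mpr ⟨isReduced_toWord, .singleton _, ?_⟩
    rw [hl]
    rintro _ ⟨⟩ _ ⟨⟩ _
    rfl

theorem isCyclic_of_ne_one_mem_center {w : FreeGroup β} (hw : w ≠ 1)
    (hc : w ∈ Subgroup.center (FreeGroup β)) : IsCyclic (FreeGroup β) := by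
  have := subsingleton_of_ne_one_mem_center hw hc
  cases isEmpty_or_nonempty β
  · infer_instance
  · have := uniqueOfSubsingleton (Classical.arbitrary β)
    infer_instance

end FreeGroup

namespace IsFreeGroup

variable {G : Type*} [Group G] [IsFreeGroup G]

theorem isCyclic_of_ne_one_mem_center {z : G} (hz : z ≠ 1) (hc : z ∈ Subgroup.center G) :
    IsCyclic G := by
  have := FreeGroup.isCyclic_of_ne_one_mem_center ((toFreeGroup G).map_ne_one_iff.mpr hz)
    (Subgroup.mem_center_iff.mpr fun g => (toFreeGroup G).symm.injective (by
      simp [Subgroup.mem_center_iff.mp hc]))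
  exact isCyclic_of_surjective (toFreeGroup G).symm (toFreeGroup G).symm.surjective

theorem commute_of_commute_of_ne_one {a b c : G} (ha : a ≠ 1) (hab : Commute a b)
    (hac : Commute a c) : Commute b c := by
  let H := Subgroup.centralizer ({a} : Set G)
  have hmem {g : G} (hg : Commute a g) : g ∈ H :=
    Subgroup.mem_centralizer_singleton_iff.mpr hg.eq.symm
  have : IsCyclic H := isCyclic_of_ne_one_mem_center (z := ⟨a, hmem (.refl a)⟩)
    (by simpa using ha) (Subgroup.mem_center_iff.mpr fun g =>
      Subtype.ext (Subgroup.mem_centralizer_singleton_iff.mp g.2))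
  exact setLike_mul_comm (hmem hab) (hmem hac)

end IsFreeGroup

theorem freeGroup_double_coset_equivalence_general {α : Type*} (m₁ m₂ : ℤ) :
    Equivalence (fun (s t : {t : FreeGroup α × FreeGroup α × FreeGroup α //
        t.1 ≠ 1 ∧ t.2.2 ≠ 1}) =>
      s.1.1 * t.1.1 = t.1.1 * s.1.1 ∧ s.1.2.2 * t.1.2.2 = t.1.2.2 * s.1.2.2 ∧
        ∃ y z : FreeGroup α, y * s.1.1 = s.1.1 * y ∧ z * s.1.2.2 = s.1.2.2 * z ∧
          y ^ m₁ * s.1.2.1 * z ^ m₂ = t.1.2.1) := by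
  have comm_trans {a b c : FreeGroup α} (ha : a ≠ 1) (hab : Commute a b) (hac : Commute a c) :
      Commute b c :=
    IsFreeGroup.commute_of_commute_of_ne_one ha hab hac
  refine ⟨fun _ => ⟨.refl _, .refl _, 1, 1, Commute.one_left _, Commute.one_left _, by simp⟩,
    ?_, ?_⟩
  · rintro ⟨⟨y₁, x₁, z₁⟩, hy₁, hz₁⟩ ⟨⟨y₂, x₂, z₂⟩, _, _⟩ ⟨h₁, h₂, y, z, hy, hz, rfl⟩
    exact ⟨h₁.symm, h₂.symm, y⁻¹, z⁻¹, (comm_trans hy₁ (.symm hy) h₁).inv_left,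
      (comm_trans hz₁ (.symm hz) h₂).inv_left, by group⟩
  · rintro ⟨⟨y₁, x₁, z₁⟩, hy₁, hz₁⟩ ⟨⟨y₂, x₂, z₂⟩, hy₂, hz₂⟩ ⟨⟨y₃, x₃, z₃⟩, _, _⟩
      ⟨h₁, h₂, y, z, hy, hz, rfl⟩ ⟨k₁, k₂, y', z', hy', hz', rfl⟩
    have hyy' : Commute y' y := comm_trans hy₂ (.symm hy') (comm_trans hy₁ (.symm hy) h₁).symm
    have hzz' : Commute z z' :=
      (comm_trans hz₂ (.symm hz') (comm_trans hz₁ (.symm hz) h₂).symm).symm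
    refine ⟨comm_trans hy₂ h₁.symm k₁, comm_trans hz₂ h₂.symm k₂, y' * y, z * z',
      Commute.mul_left (comm_trans hy₂ (.symm hy') h₁.symm) hy,
      Commute.mul_left hz (comm_trans hz₂ (.symm hz') h₂.symm), ?_⟩
    rw [hyy'.mul_zpow, hzz'.mul_zpow]
    group

theorem freeGroup_double_coset_equivalence {α : Type*} (m₁ m₂ : ℤ)
    (hm₁ : 1 ≤ m₁) (hm₂ : 1 ≤ m₂) :
    Equivalence (fun (s t : {t : FreeGroup α × FreeGroup α × FreeGroup α //
        t.1 ≠ 1 ∧ t.2.2 ≠ 1}) =>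
      s.1.1 * t.1.1 = t.1.1 * s.1.1 ∧ s.1.2.2 * t.1.2.2 = t.1.2.2 * s.1.2.2 ∧
        ∃ y z : FreeGroup α, y * s.1.1 = s.1.1 * y ∧ z * s.1.2.2 = s.1.2.2 * z ∧
          y ^ m₁ * s.1.2.1 * z ^ m₂ = t.1.2.1) :=
  freeGroup_double_coset_equivalence_general m₁ m₂
end

section
/- The kernel of a group homomorphism from a nonabelian free group to any group is never a nontrivial cyclic subgroup: if F = FreeGroup α with α having at least two elements, f : F → H is a group homomorphism, and s ∈ F is nontrivial, then ker f ≠ ⟨s⟩ (the cyclic subgroup generated by s). -/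
/-!
If `⟨s⟩` is normal with `s ≠ 1`, conjugation acts on `⟨s⟩ ≅ ℤ` by `±1`, so every square `g ^ 2`
commutes with `s`. In a free group commuting elements lie in a common cyclic subgroup
(Nielsen–Schreier: the subgroup they generate is free and abelian, hence cyclic). Hence nonzero
powers of `of x` and of `of y` both lie in `⟨s⟩` and commute, which exponent sums rule out for
`x ≠ y`.
-/

open Subgroup

theorem FreeGroup.eq_of_commute_of {α : Type*} {a b : α}
    (h : Commute (FreeGroup.of a) (FreeGroup.of b)) : a = b := by
  classical
  exact (by simpa [FreeGroup.toWord_mul] using congrArg FreeGroup.toWord h.eq : a = b ∧ b = a).1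

theorem IsFreeGroup.isCyclic_of_isMulCommutative_s14 (G : Type*) [Group G] [IsFreeGroup G]
    [IsMulCommutative G] : IsCyclic G := by
  let e := IsFreeGroup.toFreeGroup G
  have : Subsingleton (Generators G) := ⟨fun a b => FreeGroup.eq_of_commute_of <| by
    simpa using (show Commute (e.symm (.of a)) (e.symm (.of b)) from mul_comm' _ _).map e⟩
  have : IsCyclic (FreeGroup (Generators G)) := by
    cases isEmpty_or_nonempty (Generators G)
    · exact isCyclic_of_subsingleton
    · have := uniqueOfSubsingleton (Classical.arbitrary (Generators G))
      infer_instance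
  exact isCyclic_of_surjective e.symm e.symm.surjective

theorem IsFreeGroup.exists_mem_zpowers_of_commute_s14 {G : Type*} [Group G] [IsFreeGroup G]
    {g h : G} (hgh : Commute g h) : ∃ t : G, g ∈ zpowers t ∧ h ∈ zpowers t := by
  let K := closure {g, h}
  have : IsMulCommutative K := isMulCommutative_closure <| by
    simp only [Set.mem_insert_iff, Set.mem_singleton_iff]
    rintro x (rfl | rfl) y (rfl | rfl)
    exacts [rfl, hgh.eq, hgh.eq.symm, rfl]
  obtain ⟨t, ht⟩ := (isCyclic_of_isMulCommutative_s14 K).exists_generator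
  have hmem : ∀ k ∈ K, k ∈ zpowers (t : G) := fun k hk => by
    simpa [MonoidHom.map_zpowers] using mem_map_of_mem K.subtype (ht ⟨k, hk⟩)
  exact ⟨t, hmem g (subset_closure (by simp)), hmem h (subset_closure (by simp))⟩

theorem IsFreeGroup.exists_zpow_mem_zpowers_of_commute {G : Type*} [Group G] [IsFreeGroup G]
    {g s : G} (hs : s ≠ 1) (h : Commute g s) : ∃ n : ℤ, n ≠ 0 ∧ g ^ n ∈ zpowers s := by
  obtain ⟨t, ⟨i, rfl⟩, ⟨j, rfl⟩⟩ := exists_mem_zpowers_of_commute_s14 h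
  refine ⟨j, fun hj => hs (by simp [hj]), i, ?_⟩
  simp only [← zpow_mul, mul_comm]

namespace FreeGroup

variable {α : Type*}

def exponentSum [DecidableEq α] (x : α) : FreeGroup α →* Multiplicative ℤ :=
  lift fun a => .ofAdd (if a = x then 1 else 0)

@[simp]
theorem exponentSum_of [DecidableEq α] (x a : α) :
    exponentSum x (of a) = .ofAdd (if a = x then 1 else 0) :=
  lift_apply_of

theorem eq_of_commute_zpow_of {x y : α} {m n : ℤ} (hm : m ≠ 0) (hn : n ≠ 0)
    (h : Commute (of x ^ m) (of y ^ n)) : x = y := by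
  classical
  by_contra hxy
  obtain ⟨t, ⟨i, hi⟩, ⟨j, hj⟩⟩ := IsFreeGroup.exists_mem_zpowers_of_commute_s14 h
  have hx : i * (exponentSum x t).toAdd = m := by
    simpa using congrArg (fun g => (exponentSum x g).toAdd) hi
  have hy : j * (exponentSum x t).toAdd = 0 := by
    simpa [Ne.symm hxy] using congrArg (fun g => (exponentSum x g).toAdd) hj
  have hj0 : j = 0 := by
    rcases mul_eq_zero.1 hy with h | h
    · exact h
    · simp [h, hm.symm] at hx
  exact hn (by simpa [hj0] using (congrArg (fun g => (exponentSum y g).toAdd) hj).symm)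

end FreeGroup

theorem Subgroup.Normal.commute_sq_of_zpowers {G : Type*} [Group G] [IsMulTorsionFree G] {s : G}
    (hN : (zpowers s).Normal) (g : G) : Commute (g ^ 2) s := by
  rcases eq_or_ne s 1 with rfl | hs
  · exact Commute.one_right _
  obtain ⟨k, hk⟩ := mem_zpowers_iff.1 (hN.conj_mem s (mem_zpowers s) g)
  obtain ⟨m, hm⟩ := mem_zpowers_iff.1 (hN.conj_mem s (mem_zpowers s) g⁻¹)
  have hinj := injective_zpow_iff_not_isOfFinOrder.2 (not_isOfFinOrder_of_isMulTorsionFree hs)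
  have hmk : m * k = 1 := hinj <| calc
    s ^ (m * k) = (g⁻¹ * s * g⁻¹⁻¹) ^ k := by rw [zpow_mul, hm]
    _ = MulAut.conj g⁻¹ (s ^ k) := by simp [map_zpow]
    _ = s ^ (1 : ℤ) := by rw [hk]; simp [mul_assoc]
  have hkk : k * k = 1 := by
    rcases Int.eq_one_or_neg_one_of_mul_eq_one' hmk with ⟨-, rfl⟩ | ⟨-, rfl⟩ <;> rfl
  have hconj : g ^ 2 * s * (g ^ 2)⁻¹ = s := calc
    g ^ 2 * s * (g ^ 2)⁻¹ = MulAut.conj g (g * s * g⁻¹) := by simp [pow_two, mul_assoc]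
    _ = s ^ (k * k) := by rw [← hk, map_zpow, MulAut.conj_apply, ← hk, ← zpow_mul]
    _ = s := by rw [hkk, zpow_one]
  exact mul_inv_eq_iff_eq_mul.1 hconj

theorem FreeGroup.not_normal_zpowers {α : Type*} {x y : α} (hxy : x ≠ y) {s : FreeGroup α}
    (hs : s ≠ 1) : ¬(zpowers s).Normal := by
  intro hN
  obtain ⟨p, hp, i, hi⟩ :=
    IsFreeGroup.exists_zpow_mem_zpowers_of_commute hs (hN.commute_sq_of_zpowers (of x))
  obtain ⟨q, hq, j, hj⟩ :=
    IsFreeGroup.exists_zpow_mem_zpowers_of_commute hs (hN.commute_sq_of_zpowers (of y))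
  refine hxy (eq_of_commute_zpow_of (m := 2 * p) (n := 2 * q) (by omega) (by omega) ?_)
  rw [zpow_mul, zpow_mul, zpow_ofNat, zpow_ofNat, ← hi, ← hj]
  exact Commute.zpow_zpow_self s i j

theorem freeGroup_ker_ne_cyclic {α : Type*} {H : Type*} [Group H]
    (x y : α) (hxy : x ≠ y) (f : FreeGroup α →* H)
    (s : FreeGroup α) (hs : s ≠ 1) :
    f.ker ≠ Subgroup.zpowers s :=
  fun h => FreeGroup.not_normal_zpowers hxy hs (h ▸ f.normal_ker)
end

section
/- Maximal cyclic subgroups generated by a basis element of a free group are malnormal in the following sense: if a = FreeGroup.of x is a basis element of F = FreeGroup α, g ∈ F, k is a nonzero integer, and g * a^k * g⁻¹ lies in the cyclic subgroup ⟨a⟩, then g ∈ ⟨a⟩. -/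
/-!
Letters `x^{±1}` at the end of the reduced word of `g` can be moved into `⟨of x⟩` without changing
`g * of x ^ k * g⁻¹`, and they make `g` shorter. Once the last letter of `g` is `c^{±1}` with
`c ≠ x`, the reduced words of `g`, `of x ^ k` and `g⁻¹` concatenate without cancellation, so the
reduced word of the conjugate contains the letter `c` and is not a power of `of x`.
-/

namespace FreeGroup

variable {α : Type*}

theorem head?_invRev (L : List (α × Bool)) :
    (invRev L).head? = L.getLast?.map fun p => (p.1, !p.2) := by
  simp [invRev, List.head?_reverse, List.getLast?_map]

theorem mk_singleton_mem_zpowers (x : α) (b : Bool) :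
    mk [(x, b)] ∈ Subgroup.zpowers (of x) := by
  cases b
  · rw [show mk [(x, false)] = (of x)⁻¹ from (inv_mk (L := [(x, true)])).symm]
    exact inv_mem (Subgroup.mem_zpowers _)
  · exact Subgroup.mem_zpowers _

variable [DecidableEq α]

theorem toWord_zpow_of (x : α) (k : ℤ) :
    ∃ s, (of x ^ k).toWord = List.replicate k.natAbs (x, s) := by
  rcases k with n | n
  · exact ⟨true, by rw [Int.ofNat_eq_natCast, zpow_natCast, toWord_of_pow, Int.natAbs_natCast]⟩
  · refine ⟨false, ?_⟩
    rw [zpow_negSucc, toWord_inv, toWord_of_pow]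
    simp [invRev]

theorem fst_eq_of_mem_toWord_zpow_of {x : α} {k : ℤ} {p : α × Bool}
    (hp : p ∈ (of x ^ k).toWord) : p.1 = x := by
  obtain ⟨s, hs⟩ := toWord_zpow_of x k
  rw [hs] at hp
  rw [List.eq_of_mem_replicate hp]

theorem toWord_zpow_of_ne_nil (x : α) {k : ℤ} (hk : k ≠ 0) : (of x ^ k).toWord ≠ [] := by
  obtain ⟨s, hs⟩ := toWord_zpow_of x k
  simpa [hs] using hk

theorem toWord_mul_of_isReduced_s16 {u v : FreeGroup α} (h : IsReduced (u.toWord ++ v.toWord)) :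
    (u * v).toWord = u.toWord ++ v.toWord := by
  rw [toWord_mul, h.reduce_eq]

theorem toWord_conj_zpow_of {g : FreeGroup α} {x c : α} {b : Bool}
    (hlast : g.toWord.getLast? = some (c, b)) (hc : c ≠ x) {k : ℤ} (hk : k ≠ 0) :
    (g * of x ^ k * g⁻¹).toWord = g.toWord ++ ((of x ^ k).toWord ++ g⁻¹.toWord) := by
  have hx : ∀ p ∈ (of x ^ k).toWord, p.1 ≠ c := fun p hp =>
    fst_eq_of_mem_toWord_zpow_of hp ▸ hc.symm
  have hright : IsReduced ((of x ^ k).toWord ++ g⁻¹.toWord) := by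
    refine isReduced_toWord.append isReduced_toWord fun p hp q hq hpq => ?_
    rw [toWord_inv, head?_invRev, hlast] at hq
    simp only [Option.map_some, Option.mem_some_iff] at hq
    subst hq
    exact absurd hpq (hx p (List.mem_of_mem_getLast? hp))
  have hfull : IsReduced (g.toWord ++ ((of x ^ k).toWord ++ g⁻¹.toWord)) := by
    refine isReduced_toWord.append hright fun p hp q hq hpq => ?_
    rw [hlast, Option.mem_some_iff] at hp
    rw [List.head?_append_of_ne_nil _ (toWord_zpow_of_ne_nil x hk)] at hq
    subst hp
    exact absurd hpq.symm (hx q (List.mem_of_mem_head? hq))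
  rw [← toWord_mul_of_isReduced_s16 hright] at hfull ⊢
  rw [mul_assoc, toWord_mul_of_isReduced_s16 hfull]

theorem conj_zpow_of_notMem_zpowers {g : FreeGroup α} {x c : α} {b : Bool}
    (hlast : g.toWord.getLast? = some (c, b)) (hc : c ≠ x) {k : ℤ} (hk : k ≠ 0) :
    g * of x ^ k * g⁻¹ ∉ Subgroup.zpowers (of x) := by
  intro h
  obtain ⟨l, hl⟩ := Subgroup.mem_zpowers_iff.1 h
  have hmem : (c, b) ∈ (of x ^ l).toWord := by
    rw [hl, toWord_conj_zpow_of hlast hc hk]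
    exact List.mem_append_left _ (List.mem_of_mem_getLast? hlast)
  exact hc (fst_eq_of_mem_toWord_zpow_of hmem)

theorem exists_norm_lt_eq_mul_mem_zpowers {g : FreeGroup α} {x : α} {b : Bool}
    (hlast : g.toWord.getLast? = some (x, b)) :
    ∃ g', g'.norm < g.norm ∧ ∃ u ∈ Subgroup.zpowers (of x), g = g' * u := by
  have hg : g.toWord = g.toWord.dropLast ++ [(x, b)] :=
    (List.dropLast_append_getLast? _ hlast).symm
  refine ⟨mk g.toWord.dropLast, ?_, mk [(x, b)], mk_singleton_mem_zpowers x b, ?_⟩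
  · calc (mk g.toWord.dropLast).norm ≤ g.toWord.dropLast.length := norm_mk_le
      _ < g.norm := by
        rw [norm, List.length_dropLast]
        exact Nat.sub_lt (List.length_pos_of_mem (List.mem_of_mem_getLast? hlast)) one_pos
  · rw [mul_mk, ← hg, mk_toWord]

end FreeGroup

theorem freeGroup_basis_zpowers_malnormal {α : Type*} (x : α)
    (g : FreeGroup α) (k : ℤ) (hk : k ≠ 0)
    (h : g * (FreeGroup.of x) ^ k * g⁻¹ ∈ Subgroup.zpowers (FreeGroup.of x)) :
    g ∈ Subgroup.zpowers (FreeGroup.of x) := by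
  classical
  induction hn : g.norm using Nat.strong_induction_on generalizing g with
  | _ n ih =>
  rcases hlast : g.toWord.getLast? with _ | ⟨c, b⟩
  · rw [List.getLast?_eq_none_iff, FreeGroup.toWord_eq_nil_iff] at hlast
    exact hlast ▸ one_mem _
  obtain rfl | hc := eq_or_ne c x
  · obtain ⟨g', hlt, u, ⟨j, rfl⟩, rfl⟩ := FreeGroup.exists_norm_lt_eq_mul_mem_zpowers hlast
    have hconj : g' * FreeGroup.of c ^ k * g'⁻¹ ∈ Subgroup.zpowers (FreeGroup.of c) := by
      convert h using 1
      group
    exact mul_mem (ih _ (hn ▸ hlt) g' hconj rfl) ⟨j, rfl⟩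
  · exact absurd h (FreeGroup.conj_zpow_of_notMem_zpowers hlast hc hk)
end
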